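/- arXiv:2105.10826 — 7 statements merged into one kernel-verified Lean document; each statement's English description precedes it below -/
import Mathlib

section
/- The cubic polynomial q(ψ) = 1 + (C₁+C₂+C₃)ψ + (C₁C₂ + C₁C₃ + C₂C₃ − φω − αρ)ψ² + (C₁C₂C₃ − C₂φω − αρC₃)ψ³ is strictly positive for all ψ > 0, where C₁ = ρ+φ+μ, C₂ = α+μ+d, C₃ = ω+μ with all parameters ρ, φ, μ, α, d, ω positive. -/
theorem cubic_denominator_pos
    (ρ φ μ α d ω : ℝ) (hρ : 0 < ρ) (hφ : 0 < φ) (hμ : 0 < μ)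
    (hα : 0 < α) (hd : 0 < d) (hω : 0 < ω)
    (C₁ C₂ C₃ : ℝ) (hC₁ : C₁ = ρ + φ + μ) (hC₂ : C₂ = α + μ + d) (hC₃ : C₃ = ω + μ) :
    ∀ ψ : ℝ, 0 < ψ →
      0 < 1 + (C₁ + C₂ + C₃) * ψ
          + (C₁ * C₂ + C₁ * C₃ + C₂ * C₃ - φ * ω - α * ρ) * ψ ^ 2
          + (C₁ * C₂ * C₃ - C₂ * φ * ω - α * ρ * C₃) * ψ ^ 3 := by
  intro ψ hψ
  subst hC₁ hC₂ hC₃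
  have h2 : 0 < (ρ + φ + μ) * (α + μ + d) + (ρ + φ + μ) * (ω + μ)
      + (α + μ + d) * (ω + μ) - φ * ω - α * ρ := by nlinarith [mul_pos hφ hω, mul_pos hα hρ]
  have h3 : 0 < (ρ + φ + μ) * (α + μ + d) * (ω + μ)
      - (α + μ + d) * (φ * ω) - α * ρ * (ω + μ) := by
    have h : (ρ + φ + μ) * (α + μ + d) * (ω + μ)
        - (α + μ + d) * (φ * ω) - α * ρ * (ω + μ)
        = (ω + μ) * (α * μ + (μ + d) * (ρ + μ)) + (α + μ + d) * φ * μ := by ring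
    rw [h]; positivity
  nlinarith [mul_pos (mul_pos hψ hψ) hψ, mul_pos hψ hψ, mul_pos h2 (mul_pos hψ hψ), mul_pos h3 (mul_pos (mul_pos hψ hψ) hψ)]
end

section
/- If all initial values S₀, I₀, C₀, A₀ and all parameters Λ, μ, β, φ, ρ, α, ω, d, η_C, η_A of the NSFD discrete SICA system are positive, then Sₙ, Iₙ, Cₙ, Aₙ are positive for all n ≥ 0. -/
theorem nsfd_positivity
    (Λ μ β φ ρ α ω d ηC ηA ψ : ℝ)
    (hΛ : 0 < Λ) (hμ : 0 < μ) (hβ : 0 < β) (hφ : 0 < φ) (hρ : 0 < ρ)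
    (hα : 0 < α) (hω : 0 < ω) (hd : 0 < d) (hηC : 0 < ηC) (hηA : 0 < ηA)
    (hψ : 0 < ψ)
    (C₁ C₂ C₃ : ℝ) (hC₁ : C₁ = ρ + φ + μ) (hC₂ : C₂ = α + μ + d) (hC₃ : C₃ = ω + μ)
    (S I C A N : ℕ → ℝ)
    (hN : ∀ n, N n = S n + I n + C n + A n)
    (hS0 : 0 < S 0) (hI0 : 0 < I 0) (hC0 : 0 < C 0) (hA0 : 0 < A 0)
    (hS : ∀ n, S (n + 1) =
      (S n + Λ * ψ) / (1 + μ * ψ + β * ψ * (I n + ηC * C n + ηA * A n) / N n))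
    (hI : ∀ n, I (n + 1) =
      ((I n + β * ψ * S (n + 1) * (I n + ηC * C n + ηA * A n) / N n)
          * (1 + C₂ * ψ) * (1 + C₃ * ψ)
        + α * ψ * A n * (1 + C₃ * ψ) + ω * ψ * C n * (1 + C₂ * ψ))
      / ((1 + C₁ * ψ) * (1 + C₂ * ψ) * (1 + C₃ * ψ)
        - α * ρ * ψ ^ 2 * (1 + C₃ * ψ) - ω * φ * ψ ^ 2 * (1 + C₂ * ψ)))
    (hC : ∀ n, C (n + 1) = (φ * ψ * I (n + 1) + C n) / (1 + C₃ * ψ))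
    (hA : ∀ n, A (n + 1) = (ρ * ψ * I (n + 1) + A n) / (1 + C₂ * ψ)) :
    ∀ n, 0 < S n ∧ 0 < I n ∧ 0 < C n ∧ 0 < A n := by
  subst hC₁ hC₂ hC₃
  have h2 : 0 < 1 + (α + μ + d) * ψ := by positivity
  have h3 : 0 < 1 + (ω + μ) * ψ := by positivity
  intro n
  induction n with
  | zero => exact ⟨hS0, hI0, hC0, hA0⟩
  | succ n ih =>
    obtain ⟨hSn, hIn, hCn, hAn⟩ := ih
    have hNn : 0 < N n := by rw [hN]; linarith
    have hF : 0 < I n + ηC * C n + ηA * A n := by positivity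
    have hSd : 0 < 1 + μ * ψ + β * ψ * (I n + ηC * C n + ηA * A n) / N n := by
      positivity
    have hS1 : 0 < S (n + 1) := by
      rw [hS n]; positivity
    have hDen : 0 < (1 + (ρ + φ + μ) * ψ) * (1 + (α + μ + d) * ψ) * (1 + (ω + μ) * ψ)
        - α * ρ * ψ ^ 2 * (1 + (ω + μ) * ψ) - ω * φ * ψ ^ 2 * (1 + (α + μ + d) * ψ) := by
      have : (1 + (ρ + φ + μ) * ψ) * (1 + (α + μ + d) * ψ) * (1 + (ω + μ) * ψ)
          - α * ρ * ψ ^ 2 * (1 + (ω + μ) * ψ) - ω * φ * ψ ^ 2 * (1 + (α + μ + d) * ψ)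
          = (1 + μ * ψ) * (1 + (α + μ + d) * ψ) * (1 + (ω + μ) * ψ)
            + ρ * ψ * (1 + (ω + μ) * ψ) * (1 + (μ + d) * ψ)
            + φ * ψ * (1 + (α + μ + d) * ψ) * (1 + μ * ψ) := by ring
      rw [this]; positivity
    have hI1 : 0 < I (n + 1) := by
      rw [hI n]
      apply div_pos _ hDen
      have hq : 0 < β * ψ * S (n + 1) * (I n + ηC * C n + ηA * A n) / N n := by
        positivity
      have h1 : 0 < (I n + β * ψ * S (n + 1) * (I n + ηC * C n + ηA * A n) / N n)
          * (1 + (α + μ + d) * ψ) * (1 + (ω + μ) * ψ) := by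
        apply mul_pos (mul_pos _ h2) h3; linarith
      nlinarith [mul_pos (mul_pos (mul_pos hα hψ) hAn) h3,
        mul_pos (mul_pos (mul_pos hω hψ) hCn) h2]
    have hC1 : 0 < C (n + 1) := by
      rw [hC n]; apply div_pos _ h3; positivity
    have hA1 : 0 < A (n + 1) := by
      rw [hA n]; apply div_pos _ h2; positivity
    exact ⟨hS1, hI1, hC1, hA1⟩
end

section
/- If the total population of the discrete NSFD SICA model satisfies the recursion (1+μψ)Nₙ₊₁ = Λψ + Nₙ − dψAₙ₊₁ with Aₙ₊₁ ≥ 0, then Nₙ ≤ Λ/μ + (N₀ − Λ/μ)(1/(1+μψ))ⁿ for all n ≥ 0, where Λ, μ, ψ, d > 0. -/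
theorem discrete_population_bound
    (Λ μ ψ d : ℝ) (hΛ : 0 < Λ) (hμ : 0 < μ) (hψ : 0 < ψ) (hd : 0 < d)
    (N A : ℕ → ℝ) (hA : ∀ n, 0 ≤ A (n + 1))
    (hrec : ∀ n, (1 + μ * ψ) * N (n + 1) = Λ * ψ + N n - d * ψ * A (n + 1)) :
    ∀ n, N n ≤ Λ / μ + (N 0 - Λ / μ) * (1 / (1 + μ * ψ)) ^ n := by
  have hpos : 0 < 1 + μ * ψ := by positivity
  intro n
  induction n with
  | zero => simp
  | succ n ih =>
    have h1 : (1 + μ * ψ) * N (n + 1) ≤ Λ * ψ + N n := by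
      have := hrec n
      nlinarith [hA n, mul_pos hd hψ]
    have h2 : Λ * ψ + N n ≤ (1 + μ * ψ) * (Λ / μ + (N 0 - Λ / μ) * (1 / (1 + μ * ψ)) ^ (n + 1)) := by
      have hq : (1 + μ * ψ) * (1 / (1 + μ * ψ)) = 1 := by
        field_simp
      have : (1 + μ * ψ) * (Λ / μ + (N 0 - Λ / μ) * (1 / (1 + μ * ψ)) ^ (n + 1))
          = Λ * ψ + (Λ / μ + (N 0 - Λ / μ) * (1 / (1 + μ * ψ)) ^ n) := by
        rw [pow_succ]
        field_simp
        ring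
      linarith [this, ih]
    have := le_trans h1 h2
    exact (mul_le_mul_iff_right₀ hpos).mp this
end

section
/- Under the hypotheses of the discrete conservation law (Nₙ₊₁ ≤ (Λψ + Nₙ)/(1+μψ) with Λ, μ, ψ > 0), the sequence Nₙ converges, with lim sup Nₙ ≤ Λ/μ; in particular if N₀ ≤ Λ/μ then Nₙ ≤ Λ/μ for all n, so the region {0 ≤ S+I+C+A ≤ Λ/μ} is positively invariant for the discrete system. -/
theorem discrete_conservation_law
    (Λ μ ψ : ℝ) (hΛ : 0 < Λ) (hμ : 0 < μ) (hψ : 0 < ψ)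
    (N : ℕ → ℝ)
    (hrec : ∀ n, N (n + 1) ≤ (Λ * ψ + N n) / (1 + μ * ψ)) :
    Filter.limsup N Filter.atTop ≤ Λ / μ
    ∧ (N 0 ≤ Λ / μ → ∀ n, N n ≤ Λ / μ) := by
  have hden : 0 < 1 + μ * ψ := by positivity
  set r : ℝ := 1 / (1 + μ * ψ) with hr_def
  have hr0 : 0 < r := by positivity
  have hr1 : r < 1 := by
    rw [hr_def, div_lt_one hden]
    nlinarith
  set c : ℝ := max (N 0 - Λ / μ) 0 with hc_def
  have hc0 : 0 ≤ c := le_max_right _ _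
  -- key equality: (Λψ + Λ/μ + x)/(1+μψ) = Λ/μ + x * r
  have heq : ∀ x : ℝ, (Λ * ψ + (Λ / μ + x)) / (1 + μ * ψ) = Λ / μ + x * r := by
    intro x
    rw [hr_def]
    field_simp
    ring
  have key : ∀ n, N n ≤ Λ / μ + c * r ^ n := by
    intro n
    induction n with
    | zero =>
      simp only [pow_zero, mul_one]
      have : N 0 - Λ / μ ≤ c := le_max_left _ _
      linarith
    | succ n ih =>
      have h1 : N (n + 1) ≤ (Λ * ψ + (Λ / μ + c * r ^ n)) / (1 + μ * ψ) := by
        refine le_trans (hrec n) ?_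
        apply div_le_div_of_nonneg_right _ hden.le
        linarith
      calc N (n + 1) ≤ Λ / μ + (c * r ^ n) * r := by rw [← heq]; exact h1
        _ = Λ / μ + c * r ^ (n + 1) := by ring
  -- part 2: invariance
  have inv : N 0 ≤ Λ / μ → ∀ n, N n ≤ Λ / μ := by
    intro h0 n
    induction n with
    | zero => exact h0
    | succ n ih =>
      have h1 : N (n + 1) ≤ (Λ * ψ + (Λ / μ + 0)) / (1 + μ * ψ) := by
        refine le_trans (hrec n) ?_
        apply div_le_div_of_nonneg_right _ hden.le
        linarith
      have := heq 0
      rw [this] at h1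
      linarith
  refine ⟨?_, inv⟩
  -- limsup part
  have hΛμ : 0 < Λ / μ := div_pos hΛ hμ
  have htend : Filter.Tendsto (fun n => c * r ^ n) Filter.atTop (nhds 0) := by
    have : Filter.Tendsto (fun n : ℕ => r ^ n) Filter.atTop (nhds 0) :=
      tendsto_pow_atTop_nhds_zero_of_lt_one (le_of_lt hr0) hr1
    simpa using this.const_mul c
  have hbd : ∀ ε : ℝ, 0 < ε → ∀ᶠ n in Filter.atTop, N n ≤ Λ / μ + ε := by
    intro ε hε
    filter_upwards [htend.eventually (eventually_lt_nhds hε)] with n hn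
    exact le_trans (key n) (by linarith)
  by_cases hcb : Filter.IsCoboundedUnder (· ≤ ·) Filter.atTop N
  · refine le_of_forall_pos_le_add ?_
    intro ε hε
    exact Filter.limsup_le_of_le hcb (hbd ε hε)
  · rw [Filter.limsup_eq]
    have hnb : ¬ BddBelow {a | ∀ᶠ n in Filter.atTop, N n ≤ a} := by
      intro ⟨b, hb⟩
      exact hcb ⟨b, fun a ha => hb ha⟩
    rw [Real.sInf_of_not_bddBelow hnb]
    exact le_of_lt hΛμ
end

section
/- Let p₃(λ) = −λ³ + (β−C₁−C₂−C₃)λ² + ((β−C₁)(C₂+C₃) − C₂C₃ + (βη_A+α)ρ + (βη_C+ω)φ)λ + (𝒩−𝒟), where 𝒩 = β(C₂C₃+C₃η_Aρ+C₂η_Cφ) and 𝒟 = C₁C₂C₃−C₃αρ−C₂ωφ. If all parameters are positive, 𝒟 > 0, and R₀ = 𝒩/𝒟 < 1, then p₃(1) < 0. -/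
theorem p3_at_one_neg
    (β ρ φ μ α ω d ηC ηA : ℝ)
    (hβ : 0 < β) (hρ : 0 < ρ) (hφ : 0 < φ) (hμ : 0 < μ)
    (hα : 0 < α) (hω : 0 < ω) (hd : 0 < d)
    (hηA : 1 ≤ ηA) (hηC0 : 0 < ηC) (hηC1 : ηC ≤ 1)
    (C₁ C₂ C₃ 𝒩 𝒟 : ℝ)
    (hC₁ : C₁ = ρ + φ + μ) (hC₂ : C₂ = α + μ + d) (hC₃ : C₃ = ω + μ)
    (h𝒩 : 𝒩 = β * (C₂ * C₃ + C₃ * ηA * ρ + C₂ * ηC * φ))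
    (h𝒟 : 𝒟 = C₁ * C₂ * C₃ - C₃ * α * ρ - C₂ * ω * φ)
    (h𝒟pos : 0 < 𝒟)
    (hR₀ : 𝒩 / 𝒟 < 1)
    (p₃ : ℝ → ℝ)
    (hp₃ : ∀ lam, p₃ lam = -lam ^ 3 + (β - C₁ - C₂ - C₃) * lam ^ 2
      + ((β - C₁) * (C₂ + C₃) - C₂ * C₃ + (β * ηA + α) * ρ + (β * ηC + ω) * φ) * lam
      + (𝒩 - 𝒟)) :
    p₃ 1 < 0 := by
  have hND : 𝒩 < 𝒟 := (div_lt_one h𝒟pos).mp hR₀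
  -- key: β*C₂*C₃ + (β*ηA+α)*ρ*C₃ + (β*ηC+ω)*φ*C₂ < C₁*C₂*C₃
  have hkey : β * (C₂ * C₃) + (β * ηA + α) * ρ * C₃ + (β * ηC + ω) * φ * C₂
      < C₁ * C₂ * C₃ := by
    rw [h𝒩, h𝒟] at hND; nlinarith [hND]
  have hC₂pos : 0 < C₂ := by rw [hC₂]; linarith
  have hC₃pos : 0 < C₃ := by rw [hC₃]; linarith
  have hC₁pos : 0 < C₁ := by rw [hC₁]; linarith
  have hA : 0 < β * ηA + α := by nlinarith
  have hB : 0 < β * ηC + ω := by nlinarith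
  rw [hp₃]
  nlinarith [mul_pos hC₂pos hC₃pos, mul_pos hC₁pos hC₂pos, mul_pos hC₁pos hC₃pos,
    mul_lt_mul_of_pos_right hkey (by linarith : (0:ℝ) < 1 + C₂ + C₃),
    mul_pos (mul_pos hA hρ) hC₃pos, mul_pos (mul_pos hB hφ) hC₂pos,
    mul_pos hC₂pos hC₃pos, hND]
end

section
/- Suppose R₀ < 1 and 𝒟 > 0, and define the characteristic coefficients p₁ = C₁+C₂+C₃+μ−β, p₂ = μ(C₁+C₂+C₃−β) + (C₁−β)(C₂+C₃) + C₂C₃ − (βη_A+α)ρ − (βη_C+ω)φ, p₃ = μ((C₁−β)(C₂+C₃)+C₂C₃−(βη_A+α)ρ−(βη_C+ω)φ) + 𝒟(1−R₀), p₄ = μ𝒟(1−R₀). Then p₁ > 0, p₃ > 0, and p₄ > 0. -/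
theorem coefficients_pos
    (β ρ φ μ α ω d ηC ηA : ℝ)
    (hβ : 0 < β) (hρ : 0 < ρ) (hφ : 0 < φ) (hμ : 0 < μ)
    (hα : 0 < α) (hω : 0 < ω) (hd : 0 < d)
    (hηA : 1 ≤ ηA) (hηC0 : 0 < ηC) (hηC1 : ηC ≤ 1)
    (C₁ C₂ C₃ 𝒩 𝒟 R₀ : ℝ)
    (hC₁ : C₁ = ρ + φ + μ) (hC₂ : C₂ = α + μ + d) (hC₃ : C₃ = ω + μ)
    (h𝒩 : 𝒩 = β * (C₂ * C₃ + C₃ * ηA * ρ + C₂ * ηC * φ))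
    (h𝒟 : 𝒟 = C₁ * C₂ * C₃ - C₃ * α * ρ - C₂ * ω * φ)
    (h𝒟pos : 0 < 𝒟)
    (hR₀def : R₀ = 𝒩 / 𝒟) (hR₀ : R₀ < 1)
    (p₁ p₂ p₃ p₄ : ℝ)
    (hp₁ : p₁ = C₁ + C₂ + C₃ + μ - β)
    (hp₂ : p₂ = μ * (C₁ + C₂ + C₃ - β) + (C₁ - β) * (C₂ + C₃) + C₂ * C₃
      - (β * ηA + α) * ρ - (β * ηC + ω) * φ)
    (hp₃ : p₃ = μ * ((C₁ - β) * (C₂ + C₃) + C₂ * C₃ - (β * ηA + α) * ρ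
      - (β * ηC + ω) * φ) + 𝒟 * (1 - R₀))
    (hp₄ : p₄ = μ * 𝒟 * (1 - R₀)) :
    0 < p₁ ∧ 0 < p₃ ∧ 0 < p₄ := by

  have hC₂pos : 0 < C₂ := by rw [hC₂]; linarith
  have hC₃pos : 0 < C₃ := by rw [hC₃]; linarith
  have hND : 𝒩 < 𝒟 := by
    rw [hR₀def, div_lt_one h𝒟pos] at hR₀; exact hR₀
  have hkey : C₂ * ((β * ηC + ω) * φ) < C₃ * ((C₁ - β) * C₂ - (β * ηA + α) * ρ) := by
    rw [h𝒩, h𝒟] at hND; nlinarith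
  have hBpos : 0 < C₂ * ((β * ηC + ω) * φ) := by positivity
  have hApos : 0 < (β * ηA + α) * ρ := by positivity
  have hA : (β * ηA + α) * ρ < (C₁ - β) * C₂ := by nlinarith
  have h0 : 0 < (C₁ - β) * C₂ := hApos.trans hA
  have hβC₁ : β < C₁ := by nlinarith
  have hC : (β * ηC + ω) * φ < (C₁ - β) * C₃ := by
    have e : C₃ * ((C₁ - β) * C₂ - (β * ηA + α) * ρ)
        = C₂ * ((C₁ - β) * C₃) - C₃ * ((β * ηA + α) * ρ) := by ring
    have hCA : 0 < C₃ * ((β * ηA + α) * ρ) := mul_pos hC₃pos hApos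
    have h1 : C₂ * ((β * ηC + ω) * φ) < C₂ * ((C₁ - β) * C₃) := by linarith
    exact lt_of_mul_lt_mul_left h1 hC₂pos.le
  have hexp : (C₁ - β) * (C₂ + C₃) = (C₁ - β) * C₂ + (C₁ - β) * C₃ := by ring
  have hM : 0 < (C₁ - β) * (C₂ + C₃) + C₂ * C₃ - (β * ηA + α) * ρ - (β * ηC + ω) * φ := by
    have := mul_pos hC₂pos hC₃pos
    linarith
  have hp4 : 0 < 𝒟 * (1 - R₀) := by
    have : 0 < 1 - R₀ := by linarith
    positivity
  have hμM := mul_pos hμ hM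
  exact ⟨by rw [hp₁]; linarith, by rw [hp₃]; linarith,
    by rw [hp₄, mul_assoc]; exact mul_pos hμ hp4⟩
end

section
/- The endemic equilibrium components satisfy the identity S* = Λ/(λ*+μ) = Λ(𝒟 − ρdC₃)/(μ(𝒩 − ρdC₃)), where λ* = 𝒟(R₀−1)/(C₂C₃+φC₂+ρC₃), R₀ = 𝒩/𝒟, and all quantities are as in the SICA model with 𝒩 ≠ ρdC₃. -/
theorem endemic_S_identity
    (Λ μ β ρ φ α ω d ηC ηA : ℝ)
    (hΛ : 0 < Λ) (hμ : 0 < μ) (hβ : 0 < β) (hρ : 0 < ρ) (hφ : 0 < φ)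
    (hα : 0 < α) (hω : 0 < ω) (hd : 0 < d) (hηC : 0 < ηC) (hηA : 0 < ηA)
    (C₁ C₂ C₃ 𝒩 𝒟 R₀ lam : ℝ)
    (hC₁ : C₁ = ρ + φ + μ) (hC₂ : C₂ = α + μ + d) (hC₃ : C₃ = ω + μ)
    (h𝒩 : 𝒩 = β * (C₂ * C₃ + C₃ * ηA * ρ + C₂ * ηC * φ))
    (h𝒟 : 𝒟 = C₁ * C₂ * C₃ - C₃ * α * ρ - C₂ * ω * φ)
    (hR₀ : R₀ = 𝒩 / 𝒟)
    (hlam : lam = 𝒟 * (R₀ - 1) / (C₂ * C₃ + φ * C₂ + ρ * C₃))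
    (h𝒟ne : 𝒟 ≠ 0)
    (hne : 𝒩 ≠ ρ * d * C₃)
    (hlamμ : lam + μ ≠ 0) :
    Λ / (lam + μ) = Λ * (𝒟 - ρ * d * C₃) / (μ * (𝒩 - ρ * d * C₃)) := by
  have hX : C₂ * C₃ + φ * C₂ + ρ * C₃ ≠ 0 := by
    subst hC₂ hC₃; positivity
  have hlam' : lam = (𝒩 - 𝒟) / (C₂ * C₃ + φ * C₂ + ρ * C₃) := by
    rw [hlam, hR₀]; field_simp
  have hsub : 𝒩 - ρ * d * C₃ ≠ 0 := sub_ne_zero.mpr hne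
  rw [hlam'] at hlamμ ⊢
  subst hC₁ hC₂ hC₃ h𝒩 h𝒟
  field_simp at hlamμ ⊢
  rw [div_eq_div_iff (div_ne_zero_iff.mp hlamμ).1 (by intro h; apply hsub; linarith [h])]
  ring
end
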